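/- arXiv:2108.05567 — 4 statements merged into one kernel-verified Lean document; each statement's English description precedes it below -/
import Mathlib

section
/- Let Q be a score function on pairs (database, output) with sensitivity ΔQ = max over outputs p and neighboring databases D, D' of |Q(D,p) - Q(D',p)|, where outputs range over a finite set Θ. The exponential mechanism M that outputs p with probability proportional to exp(εQ(D,p)/(2ΔQ)) satisfies ε-differential privacy: for all neighboring D, D' and all p ∈ Θ, Pr[M(D)=p] ≤ exp(ε)·Pr[M(D')=p]. -/
theorem exponential_mechanism_dp
    {Db Θ : Type*} [Fintype Θ] [Nonempty Θ]
    (Neighbor : Db → Db → Prop) (Q : Db → Θ → ℝ) (ε ΔQ : ℝ)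
    (hε : 0 < ε) (hΔ : 0 < ΔQ)
    (hsens : ∀ D D' p, Neighbor D D' → |Q D p - Q D' p| ≤ ΔQ)
    (prob : Db → Θ → ℝ)
    (hprob : ∀ D p, prob D p =
      Real.exp (ε * Q D p / (2 * ΔQ)) / ∑ p' : Θ, Real.exp (ε * Q D p' / (2 * ΔQ)))
    (D D' : Db) (p : Θ) (hN : Neighbor D D') :
    prob D p ≤ Real.exp ε * prob D' p := by
  rw [hprob, hprob]
  set f : Db → Θ → ℝ := fun d q => Real.exp (ε * Q d q / (2 * ΔQ)) with hf
  have hSpos : ∀ d : Db, 0 < ∑ p' : Θ, f d p' := fun d =>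
    Finset.sum_pos (fun i _ => Real.exp_pos _) Finset.univ_nonempty
  have key : ∀ (d d' : Db) (q : Θ), Q d q - Q d' q ≤ ΔQ →
      f d q ≤ Real.exp (ε/2) * f d' q := by
    intro d d' q h1
    rw [hf, ← Real.exp_add]
    apply Real.exp_le_exp.mpr
    have h2 : ε * Q d q / (2 * ΔQ) - ε * Q d' q / (2 * ΔQ) ≤ ε / 2 := by
      rw [div_sub_div_same, ← mul_sub, div_le_div_iff₀ (by linarith) (by norm_num)]
      nlinarith [mul_le_mul_of_nonneg_left h1 hε.le]
    linarith
  have hnum : f D p ≤ Real.exp (ε/2) * f D' p :=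
    key D D' p (abs_le.mp (hsens D D' p hN)).2
  have hden : ∑ p' : Θ, f D' p' ≤ Real.exp (ε/2) * ∑ p' : Θ, f D p' := by
    rw [Finset.mul_sum]
    refine Finset.sum_le_sum fun i _ => key D' D i ?_
    have := (abs_le.mp (hsens D D' i hN)).1
    linarith
  have hfpos : 0 < f D' p := Real.exp_pos _
  calc f D p / ∑ p' : Θ, f D p'
      ≤ (Real.exp (ε/2) * f D' p) / ((∑ p' : Θ, f D' p') / Real.exp (ε/2)) := by
        apply div_le_div₀ (by positivity) hnum (by positivity)
        rw [div_le_iff₀ (Real.exp_pos _)] at *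
        linarith [hden]
    _ = Real.exp ε * (f D' p / ∑ p' : Θ, f D' p') := by
        rw [div_div_eq_mul_div]
        rw [show Real.exp ε = Real.exp (ε/2) * Real.exp (ε/2) by
          rw [← Real.exp_add]; ring_nf]
        ring
end

section
/- Suppose a mechanism M over a finite output set satisfies ε-differential privacy, and a player's utility function u is nonnegative and bounded above by u_max ≥ 0 for every output. If for every fixed output p the truthful report gives utility at least that of any untruthful report (u(truth, p) ≥ u(lie, p)), then the expected utility under M with truthful input is at least the expected utility under M with untruthful input minus ε·u_max; i.e., the mechanism is (ε·u_max)-truthful. -/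
theorem dp_implies_approx_truthfulness
    {Θ : Type*} [Fintype Θ]
    (probTruth probLie : Θ → ℝ) (uTruth uLie : Θ → ℝ) (ε umax : ℝ)
    (hε : 0 ≤ ε) (humax : 0 ≤ umax)
    (hprobTruth_nonneg : ∀ p, 0 ≤ probTruth p)
    (hprobLie_nonneg : ∀ p, 0 ≤ probLie p)
    (hprobTruth_sum : ∑ p : Θ, probTruth p = 1)
    (hprobLie_sum : ∑ p : Θ, probLie p = 1)
    (hdp : ∀ p, probTruth p ≥ Real.exp (-ε) * probLie p)
    (hu_nonneg : ∀ p, 0 ≤ uTruth p ∧ 0 ≤ uLie p)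
    (hu_bdd : ∀ p, uTruth p ≤ umax ∧ uLie p ≤ umax)
    (hdom : ∀ p, uTruth p ≥ uLie p) :
    ∑ p : Θ, probTruth p * uTruth p ≥ (∑ p : Θ, probLie p * uLie p) - ε * umax := by
  set S := ∑ p : Θ, probLie p * uLie p with hS
  have hS_nonneg : 0 ≤ S := Finset.sum_nonneg fun p _ =>
    mul_nonneg (hprobLie_nonneg p) (hu_nonneg p).2
  have hS_le : S ≤ umax := by
    calc S ≤ ∑ p : Θ, probLie p * umax := Finset.sum_le_sum fun p _ =>
            mul_le_mul_of_nonneg_left (hu_bdd p).2 (hprobLie_nonneg p)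
      _ = umax := by rw [← Finset.sum_mul, hprobLie_sum, one_mul]
  have h1 : ∑ p : Θ, probTruth p * uTruth p ≥ ∑ p : Θ, Real.exp (-ε) * probLie p * uLie p := by
    apply Finset.sum_le_sum
    intro p _
    calc Real.exp (-ε) * probLie p * uLie p ≤ probTruth p * uLie p :=
          mul_le_mul_of_nonneg_right (hdp p) (hu_nonneg p).2
      _ ≤ probTruth p * uTruth p :=
          mul_le_mul_of_nonneg_left (hdom p) (hprobTruth_nonneg p)
  have h2 : ∑ p : Θ, Real.exp (-ε) * probLie p * uLie p = Real.exp (-ε) * S := by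
    rw [hS, Finset.mul_sum]; congr 1; ext p; ring
  have h3 : Real.exp (-ε) * S ≥ (1 - ε) * S :=
    mul_le_mul_of_nonneg_right (by linarith [Real.add_one_le_exp (-ε)]) hS_nonneg
  have h4 : ε * S ≤ ε * umax := mul_le_mul_of_nonneg_left hS_le hε
  nlinarith
end

section
/- In the setting of the exponential mechanism over finite Θ with score R, maximum OPT* = max_p R(p), and minimum R_min = min_p R(p) ≥ 0: if t ≥ 0 satisfies exp(-εt/(2ΔR)) ≤ t/(OPT*·|Θ|) and OPT* > 0, then the expected score E[R(M)] = Σ_p Pr[M=p]·R(p) satisfies E[R(M)] ≥ OPT* - 3t. -/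
theorem exponential_mechanism_expected_score
    {Θ : Type*} [Fintype Θ] [Nonempty Θ]
    (R : Θ → ℝ) (ε ΔR t OPTstar : ℝ)
    (hε : 0 < ε) (hΔ : 0 < ΔR) (ht : 0 ≤ t)
    (hR_nonneg : ∀ p, 0 ≤ R p)
    (hOPT : IsGreatest (Set.range R) OPTstar)
    (hOPTpos : 0 < OPTstar)
    (hcond : Real.exp (-(ε * t) / (2 * ΔR)) ≤ t / (OPTstar * (Fintype.card Θ : ℝ)))
    (prob : Θ → ℝ)
    (hprob : ∀ p, prob p =
      Real.exp (ε * R p / (2 * ΔR)) / ∑ p' : Θ, Real.exp (ε * R p' / (2 * ΔR))) :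
    (∑ p : Θ, prob p * R p) ≥ OPTstar - 3 * t := by
  classical
  obtain ⟨⟨p₀, hp₀⟩, hub⟩ := hOPT
  set f : Θ → ℝ := fun p => Real.exp (ε * R p / (2 * ΔR)) with hf
  set S : ℝ := ∑ p : Θ, f p with hSdef
  have hfpos : ∀ p, 0 < f p := fun p => Real.exp_pos _
  have hSpos : 0 < S :=
    Finset.sum_pos (fun p _ => hfpos p) ⟨Classical.arbitrary Θ, Finset.mem_univ _⟩
  have hprob_nonneg : ∀ p, 0 ≤ prob p := by
    intro p; rw [hprob p]; positivity
  have hsum_prob : ∑ p : Θ, prob p = 1 := by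
    simp only [hprob]
    rw [← Finset.sum_div, div_self hSpos.ne']
  by_cases hcase : OPTstar ≤ 3 * t
  · have h0 : 0 ≤ ∑ p : Θ, prob p * R p :=
      Finset.sum_nonneg fun p _ => mul_nonneg (hprob_nonneg p) (hR_nonneg p)
    linarith
  push_neg at hcase
  have h2t : 0 < OPTstar - 2 * t := by linarith
  have hE0 : Real.exp (ε * OPTstar / (2 * ΔR)) ≤ S := by
    have h := Finset.single_le_sum (f := f) (fun p _ => (hfpos p).le) (Finset.mem_univ p₀)
    rw [← hSdef] at h
    simpa [hf, hp₀] using h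
  have hbad : ∀ p, R p ≤ OPTstar - 2 * t → prob p ≤ Real.exp (-(ε * t) / (2 * ΔR)) := by
    intro p hp
    rw [hprob p]
    have h1 : f p / S ≤ f p / Real.exp (ε * OPTstar / (2 * ΔR)) := by
      gcongr
    have h2 : f p / Real.exp (ε * OPTstar / (2 * ΔR))
        = Real.exp (ε * R p / (2 * ΔR) - ε * OPTstar / (2 * ΔR)) := by
      rw [hf, Real.exp_sub]
    have h3 : ε * R p / (2 * ΔR) - ε * OPTstar / (2 * ΔR) ≤ -(ε * t) / (2 * ΔR) := by
      rw [div_sub_div_same, div_le_div_iff_of_pos_right (by linarith : (0:ℝ) < 2 * ΔR)]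
      nlinarith
    calc f p / S ≤ f p / Real.exp (ε * OPTstar / (2 * ΔR)) := h1
      _ = Real.exp (ε * R p / (2 * ΔR) - ε * OPTstar / (2 * ΔR)) := h2
      _ ≤ Real.exp (-(ε * t) / (2 * ΔR)) := Real.exp_le_exp.mpr h3
  set B := Finset.univ.filter (fun p => R p ≤ OPTstar - 2 * t) with hB
  set G := Finset.univ.filter (fun p => ¬ R p ≤ OPTstar - 2 * t) with hG
  have hsplit : ∑ p ∈ B, prob p + ∑ p ∈ G, prob p = 1 := by
    rw [hB, hG, Finset.sum_filter_add_sum_filter_not, hsum_prob]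
  have hcardpos : (0:ℝ) < (Fintype.card Θ : ℝ) := by
    exact_mod_cast Fintype.card_pos
  have hBbound : ∑ p ∈ B, prob p ≤ t / OPTstar := by
    calc ∑ p ∈ B, prob p ≤ ∑ _p ∈ B, Real.exp (-(ε * t) / (2 * ΔR)) :=
          Finset.sum_le_sum fun p hp => hbad p (by simpa [hB] using hp)
      _ = (B.card : ℝ) * Real.exp (-(ε * t) / (2 * ΔR)) := by
          rw [Finset.sum_const, nsmul_eq_mul]
      _ ≤ (Fintype.card Θ : ℝ) * Real.exp (-(ε * t) / (2 * ΔR)) := by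
          gcongr
          exact_mod_cast Finset.card_le_univ B
      _ ≤ (Fintype.card Θ : ℝ) * (t / (OPTstar * (Fintype.card Θ : ℝ))) := by
          gcongr
      _ = t / OPTstar := by field_simp
  have hGsum : (1 : ℝ) - t / OPTstar ≤ ∑ p ∈ G, prob p := by linarith
  have hEG : ∑ p ∈ G, prob p * R p ≤ ∑ p : Θ, prob p * R p := by
    apply Finset.sum_le_sum_of_subset_of_nonneg (Finset.filter_subset _ _)
    intro p _ _
    exact mul_nonneg (hprob_nonneg p) (hR_nonneg p)
  have hGE : (OPTstar - 2 * t) * ∑ p ∈ G, prob p ≤ ∑ p ∈ G, prob p * R p := by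
    rw [Finset.mul_sum]
    apply Finset.sum_le_sum
    intro p hp
    have hpR : OPTstar - 2 * t < R p := by
      have := (Finset.mem_filter.mp hp).2
      linarith [lt_of_not_ge this]
    nlinarith [hprob_nonneg p]
  have hmul : (OPTstar - 2 * t) * (1 - t / OPTstar)
      ≤ (OPTstar - 2 * t) * ∑ p ∈ G, prob p :=
    mul_le_mul_of_nonneg_left hGsum h2t.le
  have hfin : OPTstar - 3 * t ≤ (OPTstar - 2 * t) * (1 - t / OPTstar) := by
    have heq : (OPTstar - 2 * t) * (1 - t / OPTstar)
        = OPTstar - 3 * t + 2 * t ^ 2 / OPTstar := by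
      field_simp
      ring
    rw [heq]
    have : 0 ≤ 2 * t ^ 2 / OPTstar := by positivity
    linarith
  linarith
end

section
/- For the exponential mechanism over a finite output set Θ with nonnegative score function R, OPT* = max_p R(p) > 0, ε > 0 and ΔR > 0, the expected score satisfies E[R(M)] ≥ OPT* - (6ΔR/ε)·ln(e + ε·OPT*·|Θ|/(2ΔR)). -/
theorem exponential_mechanism_accuracy
    {Θ : Type*} [Fintype Θ] [Nonempty Θ]
    (R : Θ → ℝ) (ε ΔR OPTstar : ℝ)
    (hε : 0 < ε) (hΔ : 0 < ΔR)
    (hR_nonneg : ∀ p, 0 ≤ R p)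
    (hOPT : IsGreatest (Set.range R) OPTstar)
    (hOPTpos : 0 < OPTstar)
    (prob : Θ → ℝ)
    (hprob : ∀ p, prob p =
      Real.exp (ε * R p / (2 * ΔR)) / ∑ p' : Θ, Real.exp (ε * R p' / (2 * ΔR))) :
    (∑ p : Θ, prob p * R p) ≥ OPTstar - (6 * ΔR / ε) *
      Real.log (Real.exp 1 + ε * OPTstar * (Fintype.card Θ : ℝ) / (2 * ΔR)) := by
  obtain ⟨hmem, hub⟩ := hOPT
  obtain ⟨pstar, hpstar⟩ := hmem
  have hub' : ∀ p, R p ≤ OPTstar := fun p => hub ⟨p, rfl⟩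
  have h2Δ : (0:ℝ) < 2 * ΔR := by linarith
  set c := ε / (2 * ΔR) with hc
  have hc0 : 0 < c := div_pos hε h2Δ
  set S := ∑ p' : Θ, Real.exp (ε * R p' / (2 * ΔR)) with hS
  have hS0 : 0 < S := Finset.sum_pos (fun p _ => Real.exp_pos _) Finset.univ_nonempty
  have hSge : Real.exp (c * OPTstar) ≤ S := by
    have heq : c * OPTstar = ε * R pstar / (2 * ΔR) := by
      rw [hc, hpstar]; ring
    rw [hS, heq]
    exact Finset.single_le_sum (f := fun p' => Real.exp (ε * R p' / (2 * ΔR)))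
      (fun p _ => (Real.exp_pos _).le) (Finset.mem_univ pstar)
  have hsum1 : ∑ p : Θ, prob p = 1 := by
    simp_rw [hprob]
    rw [← Finset.sum_div, ← hS, div_self hS0.ne']
  have hcard : 0 < (Fintype.card Θ : ℝ) := by
    exact_mod_cast Fintype.card_pos
  set x := ε * OPTstar * (Fintype.card Θ : ℝ) / (2 * ΔR) with hx
  have hx0 : 0 < x := by
    apply div_pos _ h2Δ
    positivity
  set L := Real.log (Real.exp 1 + x) with hL
  have hex0 : (0:ℝ) < Real.exp 1 + x := by positivity
  have hL1 : 1 ≤ L := by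
    rw [hL]
    calc (1:ℝ) = Real.log (Real.exp 1) := (Real.log_exp 1).symm
    _ ≤ _ := Real.log_le_log (Real.exp_pos 1) (by linarith)
  set t := (2 * ΔR / ε) * L with ht
  clear_value S
  clear_value c x L t
  have ht0 : 0 < t := by
    rw [ht]; apply mul_pos (div_pos h2Δ hε); linarith
  have hct : c * t = L := by
    rw [hc, ht]; field_simp
  have hexp : Real.exp (-(c * t)) = 1 / (Real.exp 1 + x) := by
    rw [hct, Real.exp_neg, hL, Real.exp_log hex0, one_div]
  have key : ∀ p, prob p * (OPTstar - R p) ≤ prob p * t + (1 / (Real.exp 1 + x)) * OPTstar := by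
    intro p
    have hprobpos : 0 < prob p := by
      rw [hprob]; exact div_pos (Real.exp_pos _) hS0
    by_cases h : OPTstar - R p ≤ t
    · have h1 : 0 ≤ (1 / (Real.exp 1 + x)) * OPTstar := by positivity
      nlinarith [hprobpos.le]
    · push_neg at h
      have hpb : prob p ≤ Real.exp (-(c * (OPTstar - R p))) := by
        rw [hprob]
        have heq : ε * R p / (2 * ΔR) = c * R p := by rw [hc]; ring
        rw [heq]
        calc Real.exp (c * R p) / S ≤ Real.exp (c * R p) / Real.exp (c * OPTstar) :=
              div_le_div_of_nonneg_left (Real.exp_pos _).le (Real.exp_pos _) hSge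
        _ = Real.exp (-(c * (OPTstar - R p))) := by
              rw [← Real.exp_sub]; ring_nf
      have hpb2 : prob p ≤ Real.exp (-(c * t)) := by
        refine hpb.trans (Real.exp_le_exp.mpr ?_)
        nlinarith
      rw [hexp] at hpb2
      have h1 : OPTstar - R p ≤ OPTstar := by linarith [hR_nonneg p]
      have h2 : 0 ≤ prob p * t := by positivity
      nlinarith [hprobpos.le, h.le, ht0.le]
  have hsumkey : ∑ p : Θ, prob p * (OPTstar - R p) ≤
      t + (Fintype.card Θ : ℝ) * ((1 / (Real.exp 1 + x)) * OPTstar) := by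
    calc ∑ p : Θ, prob p * (OPTstar - R p)
        ≤ ∑ p : Θ, (prob p * t + (1 / (Real.exp 1 + x)) * OPTstar) :=
          Finset.sum_le_sum (fun p _ => key p)
    _ = (∑ p : Θ, prob p) * t + (Fintype.card Θ : ℝ) * ((1 / (Real.exp 1 + x)) * OPTstar) := by
          rw [Finset.sum_add_distrib, ← Finset.sum_mul, Finset.sum_const, nsmul_eq_mul,
            Finset.card_univ]
    _ = t + (Fintype.card Θ : ℝ) * ((1 / (Real.exp 1 + x)) * OPTstar) := by
          rw [hsum1, one_mul]
  have hexpand : ∑ p : Θ, prob p * (OPTstar - R p) = OPTstar - ∑ p : Θ, prob p * R p := by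
    simp_rw [mul_sub]
    rw [Finset.sum_sub_distrib, ← Finset.sum_mul, hsum1, one_mul]
  have hcardbound : (Fintype.card Θ : ℝ) * ((1 / (Real.exp 1 + x)) * OPTstar) ≤ 2 * ΔR / ε := by
    have hco : (Fintype.card Θ : ℝ) * OPTstar = (2 * ΔR / ε) * x := by
      rw [hx]; field_simp
    have : (Fintype.card Θ : ℝ) * ((1 / (Real.exp 1 + x)) * OPTstar)
        = (2 * ΔR / ε) * (x / (Real.exp 1 + x)) := by
      rw [mul_comm (1 / (Real.exp 1 + x)) OPTstar, ← mul_assoc, hco]; ring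
    rw [this]
    have hfr : x / (Real.exp 1 + x) ≤ 1 := by
      rw [div_le_one hex0]; linarith [Real.exp_pos 1]
    nlinarith [div_pos h2Δ hε]
  have hfin : t + 2 * ΔR / ε ≤ (6 * ΔR / ε) * L := by
    have hd : 0 < 2 * ΔR / ε := div_pos h2Δ hε
    have h1 : (2 * ΔR / ε) * 1 ≤ (2 * ΔR / ε) * L :=
      mul_le_mul_of_nonneg_left hL1 hd.le
    have h6 : (6 * ΔR / ε) * L = 3 * ((2 * ΔR / ε) * L) := by ring
    rw [h6, ht]
    linarith
  rw [hexpand] at hsumkey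
  linarith [hsumkey, hcardbound, hfin]
end
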